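/- Let u ∈ C_{+,log} be (log, exp)-convex, and let L_u(r) = Σ_{n≥0} ℓ_u(n) r^n. Then for any constant a > 1, L_u(r) ≤ (e·a/log a) · u(a·r) for all r ≥ 0. -/

import Mathlib

open Real Set Filter

noncomputable def leg (u : ℝ → ℝ) (t : ℝ) : ℝ := ⨅ r : Ioi (0:ℝ), u r / (r : ℝ) ^ t

def CplusLog (u : ℝ → ℝ) : Prop :=
  ContinuousOn u (Ici 0) ∧ (∀ r ∈ Ici (0:ℝ), 0 < u r) ∧
  Tendsto (fun r => Real.log (u r) / Real.log r) atTop atTop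

lemma leg_nonneg (u : ℝ → ℝ) (hu : ∀ r ∈ Ici (0:ℝ), 0 < u r) (t : ℝ) : 0 ≤ leg u t := by
  apply Real.iInf_nonneg
  rintro ⟨r, hr⟩
  exact div_nonneg (hu r (mem_Ici.mpr (le_of_lt (mem_Ioi.mp hr)))).le (Real.rpow_nonneg hr.le t)

lemma leg_le (u : ℝ → ℝ) (hu : ∀ r ∈ Ici (0:ℝ), 0 < u r) (t : ℝ) {s : ℝ} (hs : 0 < s) :
    leg u t ≤ u s / s ^ t := by
  have hbdd : BddBelow (Set.range fun r : Ioi (0:ℝ) => u r / (r : ℝ) ^ t) := by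
    refine ⟨0, ?_⟩
    rintro x ⟨⟨r, hr⟩, rfl⟩
    exact div_nonneg (hu r (mem_Ici.mpr (le_of_lt (mem_Ioi.mp hr)))).le (Real.rpow_nonneg hr.le t)
  exact ciInf_le hbdd ⟨s, hs⟩

theorem stmt16 (u : ℝ → ℝ) (hu : CplusLog u)
    (hle : ConvexOn ℝ univ (fun x => Real.log (u (Real.exp x)))) :
    ∀ a > (1:ℝ), ∀ r ≥ (0:ℝ),
      ∑' n : ℕ, leg u n * r ^ n ≤ (Real.exp 1 * a / Real.log a) * u (a * r) := by
  intro a ha r hr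
  obtain ⟨hcont, hpos, -⟩ := hu
  have ha0 : (0:ℝ) < a := lt_trans one_pos ha
  have hloga : 0 < Real.log a := Real.log_pos ha
  have hC1 : (1:ℝ) ≤ Real.exp 1 * a / Real.log a := by
    rw [le_div_iff₀ hloga]
    nlinarith [Real.log_le_sub_one_of_pos ha0, Real.add_one_le_exp (1:ℝ)]
  rcases eq_or_lt_of_le hr with h0 | hr0
  · -- r = 0
    subst h0
    have hsum : (∑' n : ℕ, leg u n * (0:ℝ) ^ n) = leg u 0 := by
      rw [tsum_eq_single 0 (by intro n hn; simp [zero_pow hn])]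
      simp
    rw [hsum]
    have hleg0 : leg u (0:ℝ) ≤ u 0 := by
      have ht : Tendsto u (nhdsWithin 0 (Ioi 0)) (nhds (u 0)) :=
        ((hcont 0 self_mem_Ici).tendsto).mono_left
          (nhdsWithin_mono 0 Ioi_subset_Ici_self)
      refine ge_of_tendsto ht ?_
      filter_upwards [self_mem_nhdsWithin] with s hs
      have := leg_le u hpos 0 hs
      simpa using this
    have hu0 : 0 < u 0 := hpos 0 (by simp)
    calc leg u (0:ℝ) ≤ u 0 := hleg0
      _ = 1 * u 0 := (one_mul _).symm
      _ ≤ (Real.exp 1 * a / Real.log a) * u (a * 0) := by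
          rw [mul_zero]
          exact mul_le_mul_of_nonneg_right hC1 hu0.le
  · -- r > 0
    have har : 0 < a * r := mul_pos ha0 hr0
    have huar : 0 < u (a * r) := hpos _ har.le
    have hterm : ∀ n : ℕ, leg u n * r ^ n ≤ u (a * r) * (1 / a) ^ n := by
      intro n
      have h1 : leg u n ≤ u (a * r) / (a * r) ^ (n : ℝ) := leg_le u hpos n har
      have h2 : (a * r) ^ (n : ℝ) = (a * r) ^ n := Real.rpow_natCast _ n
      rw [h2] at h1
      have hrn : 0 < r ^ n := pow_pos hr0 n
      calc leg u n * r ^ n ≤ (u (a * r) / (a * r) ^ n) * r ^ n :=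
            mul_le_mul_of_nonneg_right h1 hrn.le
        _ = u (a * r) * (1 / a) ^ n := by
            rw [mul_pow, div_pow, one_pow]
            field_simp
    have hgeo : Summable (fun n : ℕ => u (a * r) * (1 / a) ^ n) := by
      apply Summable.mul_left
      apply summable_geometric_of_lt_one (by positivity)
      rw [div_lt_one ha0]; exact ha
    have hnn : ∀ n : ℕ, 0 ≤ leg u n * r ^ n := fun n =>
      mul_nonneg (leg_nonneg u hpos n) (pow_nonneg hr0.le n)
    have hsummable : Summable (fun n : ℕ => leg u n * r ^ n) :=
      Summable.of_nonneg_of_le hnn hterm hgeo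
    calc (∑' n : ℕ, leg u n * r ^ n) ≤ ∑' n : ℕ, u (a * r) * (1 / a) ^ n :=
          Summable.tsum_le_tsum hterm hsummable hgeo
      _ = u (a * r) * (1 - 1 / a)⁻¹ := by
          rw [tsum_mul_left, tsum_geometric_of_lt_one (by positivity)
            (by rw [div_lt_one ha0]; exact ha)]
      _ ≤ (Real.exp 1 * a / Real.log a) * u (a * r) := by
          rw [mul_comm]
          apply mul_le_mul_of_nonneg_right _ huar.le
          have h1a : (0:ℝ) < 1 - 1 / a := by
            rw [sub_pos, div_lt_one ha0]; exact ha
          have heq : (1 - 1 / a)⁻¹ = a / (a - 1) := by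
            field_simp
          rw [heq, div_le_div_iff₀ (by linarith) hloga]
          have hlog := Real.log_le_sub_one_of_pos ha0
          have he : (2:ℝ) ≤ Real.exp 1 := by linarith [Real.add_one_le_exp (1:ℝ)]
          nlinarith [mul_le_mul_of_nonneg_left hlog ha0.le,
            mul_nonneg (mul_nonneg (by linarith : (0:ℝ) ≤ Real.exp 1 - 1) ha0.le)
              (by linarith : (0:ℝ) ≤ a - 1)]
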